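/- Let a be strongly degenerate at x₀ ∈ (0,1). Then H¹_{1/a}(0,1) = {u ∈ H¹_{1/a}(0,1) : u(x₀) = 0}, i.e. every u ∈ H¹(0,1) with ∫₀¹ u²/a dx < ∞ satisfies u(x₀) = 0; moreover, there exists C > 0 such that for all u ∈ H¹_{1/a}(0,1), ∫₀¹ u²/a dx + ∫₀¹ (u')² dx ≤ C ∫₀¹ (u')² dx (so the H¹_{1/a}-norm is equivalent to (∫₀¹ (u')² dx)^{1/2} on H¹_{1/a}(0,1)). -/

import Mathlib

open MeasureTheory Set Filter

noncomputable section

/-- Absolute continuity of `u` on `[c,d]`, encoded via the fundamental theorem of calculus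
with an integrable derivative. -/
def ACOn (u : ℝ → ℝ) (c d : ℝ) : Prop :=
  IntervalIntegrable (deriv u) volume c d ∧
    ∀ x ∈ Icc c d, u x = u c + ∫ t in c..x, deriv u t

/-- Membership in `H¹(0,1)`. -/
def MemH1 (u : ℝ → ℝ) : Prop :=
  ACOn u 0 1 ∧ IntegrableOn (fun x => (u x)^2) (Ioo 0 1) ∧
    IntegrableOn (fun x => (deriv u x)^2) (Ioo 0 1)

/-- `a ∈ W^{1,1}(0,1)`. -/
def W11 (a : ℝ → ℝ) : Prop := ACOn a 0 1

/-- `a ∈ W^{1,∞}(0,1)`. -/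
def W1infty (a : ℝ → ℝ) : Prop :=
  ACOn a 0 1 ∧ ∃ M : ℝ, ∀ᵐ x ∂(volume.restrict (Icc (0:ℝ) 1)), |deriv a x| ≤ M

/-- Common part of the degeneracy conditions at `x₀` with constant `K`. -/
def DegAt (a : ℝ → ℝ) (x₀ K : ℝ) : Prop :=
  x₀ ∈ Ioo (0:ℝ) 1 ∧ a x₀ = 0 ∧ (∀ x ∈ Icc (0:ℝ) 1, x ≠ x₀ → 0 < a x) ∧
    ∀ᵐ x ∂(volume.restrict (Icc (0:ℝ) 1)), (x - x₀) * deriv a x ≤ K * a x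

/-- `a` is weakly degenerate at `x₀` with constant `K`. -/
def WeaklyDeg (a : ℝ → ℝ) (x₀ K : ℝ) : Prop :=
  DegAt a x₀ K ∧ W11 a ∧ K ∈ Ioo (0:ℝ) 1

/-- `a` is strongly degenerate at `x₀` with constant `K`. -/
def StronglyDeg (a : ℝ → ℝ) (x₀ K : ℝ) : Prop :=
  DegAt a x₀ K ∧ W1infty a ∧ K ∈ Ico (1:ℝ) 2

/-- Weakly (`wk = true`) or strongly (`wk = false`) degenerate. -/
def Deg (a : ℝ → ℝ) (x₀ K : ℝ) (wk : Bool) : Prop :=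
  cond wk (WeaklyDeg a x₀ K) (StronglyDeg a x₀ K)

/-- `H¹_a(0,1)` in the weakly degenerate case: absolutely continuous on `[0,1]`
with `√a · u' ∈ L²(0,1)`. -/
def MemH1aWeak (a u : ℝ → ℝ) : Prop :=
  ACOn u 0 1 ∧ IntegrableOn (fun x => a x * (deriv u x)^2) (Ioo 0 1)

/-- Locally absolutely continuous on `[0,x₀) ∪ (x₀,1]`. -/
def LocACAway (u : ℝ → ℝ) (x₀ : ℝ) : Prop :=
  (∀ c d : ℝ, 0 ≤ c → c ≤ d → d < x₀ → ACOn u c d) ∧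
  (∀ c d : ℝ, x₀ < c → c ≤ d → d ≤ 1 → ACOn u c d)

/-- `H¹_a(0,1)` in the strongly degenerate case. -/
def MemH1aStrong (a u : ℝ → ℝ) (x₀ : ℝ) : Prop :=
  IntegrableOn (fun x => (u x)^2) (Ioo 0 1) ∧ LocACAway u x₀ ∧
    IntegrableOn (fun x => a x * (deriv u x)^2) (Ioo 0 1)

/-- `H¹_a(0,1)`, weak (`wk = true`) or strong (`wk = false`) version. -/
def MemH1a (a u : ℝ → ℝ) (x₀ : ℝ) (wk : Bool) : Prop :=
  cond wk (MemH1aWeak a u) (MemH1aStrong a u x₀)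

/-- `H²_a(0,1) = {u ∈ H¹_a(0,1) : a u' ∈ H¹(0,1)}`. -/
def MemH2a (a u : ℝ → ℝ) (x₀ : ℝ) (wk : Bool) : Prop :=
  MemH1a a u x₀ wk ∧ ACOn (fun x => a x * deriv u x) 0 1 ∧
    IntegrableOn (fun x => (deriv (fun y => a y * deriv u y) x)^2) (Ioo 0 1)

/-- `D(A₁) = {u ∈ H²_a(0,1) : u'(0) = u'(1) = 0}`. -/
def MemDA1 (a u : ℝ → ℝ) (x₀ : ℝ) (wk : Bool) : Prop :=
  MemH2a a u x₀ wk ∧ deriv u 0 = 0 ∧ deriv u 1 = 0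

/-- `L²_{1/a}(0,1)`. -/
def MemL2inva (a u : ℝ → ℝ) : Prop :=
  IntegrableOn (fun x => (u x)^2) (Ioo 0 1) ∧
    IntegrableOn (fun x => (u x)^2 / a x) (Ioo 0 1)

/-- `H¹_{1/a}(0,1) = L²_{1/a}(0,1) ∩ H¹(0,1)`. -/
def MemH1inva (a u : ℝ → ℝ) : Prop :=
  MemL2inva a u ∧ ACOn u 0 1 ∧ IntegrableOn (fun x => (deriv u x)^2) (Ioo 0 1)

/-- `H²_{1/a}(0,1) = {u ∈ H¹_{1/a}(0,1) : u' ∈ H¹(0,1)}` (then `a u'' ∈ L²_{1/a}`). -/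
def MemH2inva (a u : ℝ → ℝ) : Prop :=
  MemH1inva a u ∧ ACOn (deriv u) 0 1 ∧
    IntegrableOn (fun x => a x * (deriv (deriv u) x)^2) (Ioo 0 1)

/-- `D(A₂) = {u ∈ H²_{1/a}(0,1) : u'(0) = u'(1) = 0}`. -/
def MemDA2 (a u : ℝ → ℝ) : Prop :=
  MemH2inva a u ∧ deriv u 0 = 0 ∧ deriv u 1 = 0

/-- The time weight `Θ(t) = 1/(t(T-t))⁴`. -/
def Theta (T t : ℝ) : ℝ := 1 / (t * (T - t))^4

/-- The space weight `ψ(x) = c₁ (∫_{x₀}^x (y-x₀)/a(y) dy − c₂)`. -/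
def psiW (a : ℝ → ℝ) (x₀ c₁ c₂ x : ℝ) : ℝ :=
  c₁ * ((∫ y in x₀..x, (y - x₀) / a y) - c₂)

/-- The weight `φ(t,x) = Θ(t) ψ(x)`. -/
def phiW (a : ℝ → ℝ) (x₀ c₁ c₂ T t x : ℝ) : ℝ := Theta T t * psiW a x₀ c₁ c₂ x

/-- The space weight `μ(x) = d₁ (∫_{x₀}^x (y-x₀)e^{R(y-x₀)²}/a(y) dy − d₂)`. -/
def muW (a : ℝ → ℝ) (x₀ d₁ d₂ R x : ℝ) : ℝ :=
  d₁ * ((∫ y in x₀..x, (y - x₀) * Real.exp (R * (y - x₀)^2) / a y) - d₂)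

/-- The weight `γ(t,x) = Θ(t) μ(x)`. -/
def gammaW (a : ℝ → ℝ) (x₀ d₁ d₂ R T t x : ℝ) : ℝ := Theta T t * muW a x₀ d₁ d₂ R x

/-- Hypotheses (A) of the divergence-form Carleman estimate. -/
def HypA (a : ℝ → ℝ) (x₀ K : ℝ) (wk : Bool) : Prop :=
  cond wk
    (WeaklyDeg a x₀ K ∧ ContDiffOn ℝ 1 a (Icc 0 1 \ {x₀}))
    (StronglyDeg a x₀ K ∧
      (4/3 < K → ∃ ϑ, ϑ ∈ Ioc (0:ℝ) K ∧
        AntitoneOn (fun x => a x / |x - x₀| ^ ϑ) (Ico 0 x₀) ∧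
        MonotoneOn (fun x => a x / |x - x₀| ^ ϑ) (Ioc x₀ 1) ∧
        (3/2 < K →
          (∃ ε > 0, ∀ x ∈ Icc (0:ℝ) 1, x ≠ x₀ → ε ≤ a x / |x - x₀| ^ ϑ) ∧
          ∃ S > 0, ∀ᵐ x ∂(volume.restrict (Icc (0:ℝ) 1)),
            |deriv a x| ≤ S * |x - x₀| ^ (2*ϑ - 3))))

/-- Hypotheses (B) of the non-divergence-form Carleman estimate. -/
def HypB (a : ℝ → ℝ) (x₀ K : ℝ) (wk : Bool) : Prop :=
  Deg a x₀ K wk ∧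
  (∃ L : NNReal, LipschitzOnWith L (fun x => (x - x₀) * deriv a x / a x) (Icc 0 1)) ∧
  (1/2 ≤ K → ∃ ϑ, ϑ ∈ Ioc (0:ℝ) K ∧
      AntitoneOn (fun x => a x / |x - x₀| ^ ϑ) (Ico 0 x₀) ∧
      MonotoneOn (fun x => a x / |x - x₀| ^ ϑ) (Ioc x₀ 1))

/-- `g ∈ L^∞_loc([0,1] ∖ {x₀})`. -/
def LocBddAway (g : ℝ → ℝ) (x₀ : ℝ) : Prop :=
  ∀ c d : ℝ, Icc c d ⊆ Icc (0:ℝ) 1 \ {x₀} →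
    ∃ M : ℝ, ∀ x ∈ Icc c d, |g x| ≤ M

/-- `h ∈ W^{1,∞}_loc([0,1] ∖ {x₀}; L^∞(0,1))`. -/
def LocW1inftyAway (h : ℝ → ℝ → ℝ) (x₀ : ℝ) : Prop :=
  ∀ c d : ℝ, Icc c d ⊆ Icc (0:ℝ) 1 \ {x₀} →
    (∃ M : ℝ, ∀ x ∈ Icc c d, ∀ B ∈ Icc (0:ℝ) 1, |h x B| ≤ M) ∧
    ∃ L : NNReal, ∀ B ∈ Icc (0:ℝ) 1, LipschitzOnWith L (fun x => h x B) (Icc c d)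

/-- Hypothesis (O) (with `σ = -1`) resp. (O') (with `σ = 1`):
`σ (a'/(2√a))(∫ₓᴮ g + h₀) + √a g = h(x,B)` for a.e. `x` and all admissible `B`. -/
def HypOgen (σ : ℝ) (a g : ℝ → ℝ) (h : ℝ → ℝ → ℝ) (g₀ h₀ x₀ : ℝ) : Prop :=
  0 < g₀ ∧ 0 < h₀ ∧
  (∀ᵐ x ∂(volume.restrict (Icc (0:ℝ) 1)), g₀ ≤ g x) ∧
  LocBddAway g x₀ ∧ LocW1inftyAway h x₀ ∧
  ∀ᵐ x ∂(volume.restrict (Icc (0:ℝ) 1)), ∀ B ∈ Icc (0:ℝ) 1,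
    ((x < B ∧ B < x₀) ∨ (x₀ < x ∧ x < B)) →
      σ * (deriv a x / (2 * Real.sqrt (a x))) * ((∫ t in x..B, g t) + h₀)
        + Real.sqrt (a x) * g x = h x B

/-- The space-time cylinder `Q_T = (0,T) × (0,1)`. -/
def QT (T : ℝ) : Set (ℝ × ℝ) := Ioo 0 T ×ˢ Ioo (0:ℝ) 1

/-- The class `𝒱 = L²(0,T; D(A₁)) ∩ H¹(0,T; H¹_a(0,1))`. -/
def InClassV (a : ℝ → ℝ) (x₀ T : ℝ) (wk : Bool) (v : ℝ → ℝ → ℝ) : Prop :=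
  (∀ t ∈ Ioo (0:ℝ) T, MemDA1 a (v t) x₀ wk) ∧
  IntegrableOn (fun p : ℝ × ℝ =>
    (v p.1 p.2)^2 + a p.2 * (deriv (v p.1) p.2)^2
      + (deriv (fun y => a y * deriv (v p.1) y) p.2)^2) (QT T) ∧
  IntegrableOn (fun p : ℝ × ℝ =>
    (deriv (fun τ => v τ p.2) p.1)^2
      + a p.2 * (deriv (fun y => deriv (fun τ => v τ y) p.1) p.2)^2) (QT T)

/-- The class `𝒮 = H¹(0,T; H¹_{1/a}(0,1)) ∩ L²(0,T; H²_{1/a}(0,1))`. -/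
def InClassS (a : ℝ → ℝ) (T : ℝ) (v : ℝ → ℝ → ℝ) : Prop :=
  (∀ t ∈ Ioo (0:ℝ) T, MemH2inva a (v t)) ∧
  IntegrableOn (fun p : ℝ × ℝ =>
    (v p.1 p.2)^2 / a p.2 + (deriv (v p.1) p.2)^2
      + a p.2 * (deriv (deriv (v p.1)) p.2)^2) (QT T) ∧
  IntegrableOn (fun p : ℝ × ℝ =>
    (deriv (fun τ => v τ p.2) p.1)^2 / a p.2
      + (deriv (fun y => deriv (fun τ => v τ y) p.1) p.2)^2) (QT T)

/-- Neumann boundary conditions `v_x(t,0) = v_x(t,1) = 0` for `t ∈ (0,T)`. -/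
def NeumannBC (T : ℝ) (v : ℝ → ℝ → ℝ) : Prop :=
  ∀ t ∈ Ioo (0:ℝ) T, deriv (v t) 0 = 0 ∧ deriv (v t) 1 = 0

/-- The equation `v_t + (a v_x)_x = h` in `Q_T`. -/
def SolDiv (a : ℝ → ℝ) (T : ℝ) (v h : ℝ → ℝ → ℝ) : Prop :=
  ∀ t ∈ Ioo (0:ℝ) T, ∀ x ∈ Ioo (0:ℝ) 1,
    deriv (fun τ => v τ x) t + deriv (fun y => a y * deriv (v t) y) x = h t x

/-- The equation `v_t + a v_xx = h` in `Q_T`. -/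
def SolNonDiv (a : ℝ → ℝ) (T : ℝ) (v h : ℝ → ℝ → ℝ) : Prop :=
  ∀ t ∈ Ioo (0:ℝ) T, ∀ x ∈ Ioo (0:ℝ) 1,
    deriv (fun τ => v τ x) t + a x * deriv (deriv (v t)) x = h t x

/-- Test function class `H¹(0,T; L²(0,1)) ∩ L²(0,T; H¹_a(0,1))` for the weak formulation
in divergence form. -/
def TestClassDiv (a : ℝ → ℝ) (x₀ T : ℝ) (wk : Bool) (φ : ℝ → ℝ → ℝ) : Prop :=
  (∀ t ∈ Icc (0:ℝ) T, MemH1a a (φ t) x₀ wk) ∧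
  IntegrableOn (fun p : ℝ × ℝ =>
    (φ p.1 p.2)^2 + a p.2 * (deriv (φ p.1) p.2)^2
      + (deriv (fun τ => φ τ p.2) p.1)^2) (QT T)

/-- Weak solution of `v_t + (a v_x)_x = 0` with Neumann boundary conditions. -/
def WeakSolDiv (a : ℝ → ℝ) (x₀ T : ℝ) (wk : Bool) (v : ℝ → ℝ → ℝ) : Prop :=
  (∀ t ∈ Icc (0:ℝ) T, MemH1a a (v t) x₀ wk) ∧
  IntegrableOn (fun p : ℝ × ℝ =>
    (v p.1 p.2)^2 + a p.2 * (deriv (v p.1) p.2)^2) (QT T) ∧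
  ∀ φ : ℝ → ℝ → ℝ, TestClassDiv a x₀ T wk φ →
    (∫ x in Ioo (0:ℝ) 1, v T x * φ T x) - (∫ x in Ioo (0:ℝ) 1, v 0 x * φ 0 x)
      - (∫ t in Ioo (0:ℝ) T, ∫ x in Ioo (0:ℝ) 1, v t x * deriv (fun τ => φ τ x) t)
      = ∫ t in Ioo (0:ℝ) T, ∫ x in Ioo (0:ℝ) 1, a x * deriv (v t) x * deriv (φ t) x

/-- Test function class `H¹(0,T; L²_{1/a}(0,1)) ∩ L²(0,T; H¹_{1/a}(0,1))` for the weak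
formulation in non-divergence form. -/
def TestClassNonDiv (a : ℝ → ℝ) (T : ℝ) (φ : ℝ → ℝ → ℝ) : Prop :=
  (∀ t ∈ Icc (0:ℝ) T, MemH1inva a (φ t)) ∧
  IntegrableOn (fun p : ℝ × ℝ =>
    (φ p.1 p.2)^2 / a p.2 + (deriv (φ p.1) p.2)^2
      + (deriv (fun τ => φ τ p.2) p.1)^2 / a p.2) (QT T)

/-- Weak solution of `v_t + a v_xx = 0` with Neumann boundary conditions. -/
def WeakSolNonDiv (a : ℝ → ℝ) (T : ℝ) (v : ℝ → ℝ → ℝ) : Prop :=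
  (∀ t ∈ Icc (0:ℝ) T, MemH1inva a (v t)) ∧
  IntegrableOn (fun p : ℝ × ℝ =>
    (v p.1 p.2)^2 / a p.2 + (deriv (v p.1) p.2)^2) (QT T) ∧
  ∀ φ : ℝ → ℝ → ℝ, TestClassNonDiv a T φ →
    (∫ x in Ioo (0:ℝ) 1, v T x * φ T x / a x) - (∫ x in Ioo (0:ℝ) 1, v 0 x * φ 0 x / a x)
      - (∫ t in Ioo (0:ℝ) T, ∫ x in Ioo (0:ℝ) 1, v t x * deriv (fun τ => φ τ x) t / a x)
      = ∫ t in Ioo (0:ℝ) T, ∫ x in Ioo (0:ℝ) 1, deriv (v t) x * deriv (φ t) x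

end

/-!
Since `|a'| ≤ M` and `a x₀ = 0`, we have `a x ≤ M |x - x₀|`; if `u x₀ ≠ 0`, then near `x₀` the
integrand `u² / a` dominates a multiple of `|x - x₀|⁻¹`, which is not integrable.
For the norm bound, `(x - x₀) a' ≤ K a` makes `a / |x - x₀| ^ K` monotone on each side of `x₀`
(an integral Grönwall argument, needed because `a` is only absolutely continuous), so
`a ≥ c |x - x₀| ^ K`. Since `u x₀ = 0`, Cauchy–Schwarz gives `u x ^ 2 ≤ |x - x₀| ∫ u'²`, hence
`u² / a ≤ (∫ u'²) |x - x₀| ^ (1 - K) / c`, which is integrable because `K < 2`.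
-/

open scoped Topology

theorem sq_integral_le_measureReal_mul_integral_sq {α : Type*} [MeasurableSpace α]
    {μ : Measure α} [IsFiniteMeasure μ] {f : α → ℝ} (hf : Integrable f μ)
    (hf2 : Integrable (fun x => f x ^ 2) μ) :
    (∫ x, f x ∂μ) ^ 2 ≤ μ.real univ * ∫ x, f x ^ 2 ∂μ := by
  set L := μ.real univ
  set I := ∫ x, f x ∂μ
  -- expanding `0 ≤ ∫ (L f - I)²` gives `0 ≤ L (L ∫ f² - I²)`
  have hexp : ∫ x, (L * f x - I) ^ 2 ∂μ = L * (L * ∫ x, f x ^ 2 ∂μ - I ^ 2) := by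
    have h : ∀ x, (L * f x - I) ^ 2 = L ^ 2 * f x ^ 2 - (2 * L * I) * f x + I ^ 2 := fun x => by
      ring
    simp_rw [h]
    rw [integral_add (f := fun x => L ^ 2 * f x ^ 2 - (2 * L * I) * f x) (g := fun _ => I ^ 2)
        ((hf2.const_mul _).sub (hf.const_mul _)) (integrable_const _),
      integral_sub (hf2.const_mul _) (hf.const_mul _), integral_const_mul, integral_const_mul,
      integral_const, smul_eq_mul]
    ring
  have hnonneg : 0 ≤ L * (L * ∫ x, f x ^ 2 ∂μ - I ^ 2) :=
    hexp ▸ integral_nonneg fun x => sq_nonneg _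
  rcases (measureReal_nonneg : 0 ≤ L).eq_or_lt with hL | hL
  · have hμ : μ = 0 := Measure.measure_univ_eq_zero.1
      ((measureReal_eq_zero_iff (measure_ne_top μ univ)).1 hL.symm)
    simp [I, hμ]
  · nlinarith

theorem intervalIntegrable_abs_rpow {r a b : ℝ} (hr : -1 < r) :
    IntervalIntegrable (fun x => |x| ^ r) volume a b := by
  have hpos : ∀ c, 0 ≤ c → IntervalIntegrable (fun x => |x| ^ r) volume 0 c := fun c hc =>
    (intervalIntegral.intervalIntegrable_rpow' hr).congr
      (fun x hx => by rw [uIoc_of_le hc] at hx; simp [abs_of_pos hx.1])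
  have hall : ∀ c, IntervalIntegrable (fun x => |x| ^ r) volume 0 c := by
    intro c
    rcases le_total 0 c with hc | hc
    · exact hpos c hc
    · rw [IntervalIntegrable.iff_comp_neg, neg_zero]
      simpa only [abs_neg] using hpos (-c) (by linarith)
  exact (hall a).symm.trans (hall b)

theorem integral_gronwall_weighted {f g w : ℝ → ℝ} {c d : ℝ} (hcd : c ≤ d)
    (hf : ContinuousOn f (Icc c d)) (hg : ContinuousOn g (Icc c d))
    (hg0 : ∀ t ∈ Icc c d, 0 ≤ g t) (hw : ContinuousOn w (Icc c d))
    (hw0 : ∀ t ∈ Icc c d, 0 ≤ w t) (hw' : ∀ t ∈ Ioo c d, HasDerivAt w (-(g t * w t)) t)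
    (hle : ∀ y ∈ Icc c d, f y ≤ f c + ∫ t in c..y, g t * f t) :
    f d * w d ≤ f c * w c := by
  have hgf : ContinuousOn (fun t => g t * f t) (Icc c d) := hg.mul hf
  set v := fun y => f c + ∫ t in c..y, g t * f t
  have hv : ContinuousOn v (Icc c d) := by
    have := intervalIntegral.continuousOn_primitive_interval'
      (hgf.intervalIntegrable_of_Icc (μ := volume) hcd) left_mem_uIcc
    rw [uIcc_of_le hcd] at this
    exact continuousOn_const.add this
  have hv' : ∀ t ∈ Ioo c d, HasDerivAt v (g t * f t) t := fun t ht =>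
    (intervalIntegral.integral_hasDerivAt_right
      ((hgf.mono (Icc_subset_Icc le_rfl ht.2.le)).intervalIntegrable_of_Icc ht.1.le)
      ((hgf.mono Ioo_subset_Icc_self).stronglyMeasurableAtFilter isOpen_Ioo t ht)
      ((hgf t (Ioo_subset_Icc_self ht)).continuousAt (Icc_mem_nhds ht.1 ht.2))).const_add _
  -- `(v w)' = g w (f - v) ≤ 0`
  have hanti : AntitoneOn (fun y => v y * w y) (Icc c d) := by
    refine antitoneOn_of_hasDerivWithinAt_nonpos
      (f' := fun t => g t * f t * w t + v t * -(g t * w t)) (convex_Icc c d) (hv.mul hw) ?_ ?_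
    · intro t ht
      rw [interior_Icc] at ht
      exact ((hv' t ht).mul (hw' t ht)).hasDerivWithinAt
    · intro t ht
      rw [interior_Icc] at ht
      have ht' := Ioo_subset_Icc_self ht
      nlinarith [mul_nonneg (mul_nonneg (hg0 t ht') (hw0 t ht')) (sub_nonneg.2 (hle t ht'))]
  calc f d * w d ≤ v d * w d :=
        mul_le_mul_of_nonneg_right (hle d (right_mem_Icc.2 hcd)) (hw0 d (right_mem_Icc.2 hcd))
    _ ≤ v c * w c := hanti (left_mem_Icc.2 hcd) (right_mem_Icc.2 hcd) hcd
    _ = f c * w c := by simp [v]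

theorem integral_gronwall_weighted_rev {f g w : ℝ → ℝ} {c d : ℝ} (hcd : c ≤ d)
    (hf : ContinuousOn f (Icc c d)) (hg : ContinuousOn g (Icc c d))
    (hg0 : ∀ t ∈ Icc c d, 0 ≤ g t) (hw : ContinuousOn w (Icc c d))
    (hw0 : ∀ t ∈ Icc c d, 0 ≤ w t) (hw' : ∀ t ∈ Ioo c d, HasDerivAt w (g t * w t) t)
    (hle : ∀ y ∈ Icc c d, f y ≤ f d + ∫ t in y..d, g t * f t) :
    f c * w c ≤ f d * w d := by
  have hneg : ∀ t ∈ Icc (-d) (-c), -t ∈ Icc c d := fun t ht =>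
    ⟨le_neg.2 ht.2, neg_le.2 ht.1⟩
  have hmaps : MapsTo Neg.neg (Icc (-d) (-c)) (Icc c d) := hneg
  simpa using integral_gronwall_weighted (f := fun y => f (-y)) (g := fun y => g (-y))
    (w := fun y => w (-y)) (neg_le_neg hcd) (hf.comp continuousOn_neg hmaps)
    (hg.comp continuousOn_neg hmaps) (fun t ht => hg0 _ (hneg t ht))
    (hw.comp continuousOn_neg hmaps) (fun t ht => hw0 _ (hneg t ht))
    (fun t ht => by
      simpa [Function.comp_def] using
        (hw' (-t) ⟨lt_neg.2 ht.2, neg_lt.2 ht.1⟩).comp t (hasDerivAt_neg t))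
    (fun y hy => by
      simpa [intervalIntegral.integral_comp_neg (fun t => g t * f t)] using hle (-y) (hneg y hy))

theorem eq_zero_of_integrableOn_sq_div_of_le_mul_sub {u a : ℝ → ℝ} {x₀ b M : ℝ}
    (hb : x₀ < b) (hu : ContinuousAt u x₀) (hpos : ∀ x ∈ Ioo x₀ b, 0 < a x)
    (hle : ∀ x ∈ Ioo x₀ b, a x ≤ M * (x - x₀))
    (hint : IntegrableOn (fun x => u x ^ 2 / a x) (Ioo x₀ b)) : u x₀ = 0 := by
  by_contra hne
  set ε := u x₀ ^ 2 / 2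
  have hε : 0 < ε := by positivity
  have hnear : ∀ᶠ x in 𝓝[>] x₀, ε < u x ^ 2 :=
    nhdsWithin_le_nhds ((hu.pow 2).eventually (lt_mem_nhds (half_lt_self (by positivity))))
  obtain ⟨b', hb', hsub⟩ := (mem_nhdsGT_iff_exists_Ioo_subset' hb).1 hnear
  set b'' := min b b'
  have hb'' : x₀ < b'' := lt_min hb hb'
  have hinv : IntegrableOn (fun x => (x - x₀)⁻¹) (Ioo x₀ b'') := by
    refine Integrable.mono' ((hint.mono_set (Ioo_subset_Ioo_right (min_le_left _ _))).const_mul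
      (M / ε)) ((measurable_id.sub_const x₀).inv.aestronglyMeasurable) ?_
    filter_upwards [ae_restrict_mem measurableSet_Ioo] with x hx
    have hxb : x ∈ Ioo x₀ b := ⟨hx.1, hx.2.trans_le (min_le_left _ _)⟩
    have hd : 0 < x - x₀ := sub_pos.2 hx.1
    have hax := hpos x hxb
    have hεu : ε ≤ u x ^ 2 := (hsub ⟨hx.1, hx.2.trans_le (min_le_right _ _)⟩).le
    have hinv_le : (x - x₀)⁻¹ ≤ M / a x := by
      rw [inv_eq_one_div, div_le_div_iff₀ hd hax]
      linarith [hle x hxb]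
    rw [Real.norm_eq_abs, abs_of_pos (inv_pos.2 hd)]
    calc (x - x₀)⁻¹ = ε⁻¹ * (ε * (x - x₀)⁻¹) := by field_simp
      _ ≤ ε⁻¹ * (u x ^ 2 * (M / a x)) := by gcongr
      _ = M / ε * (u x ^ 2 / a x) := by ring
  have := (intervalIntegrable_iff_integrableOn_Ioo_of_le hb''.le).2 hinv
  rw [intervalIntegrable_sub_inv_iff] at this
  rcases this with h | h
  · exact hb''.ne h
  · exact h left_mem_uIcc

namespace ACOn

variable {u : ℝ → ℝ} {c d x y : ℝ}

theorem intervalIntegrable_deriv (hu : ACOn u c d) (hx : x ∈ Icc c d) (hy : y ∈ Icc c d) :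
    IntervalIntegrable (deriv u) volume x y :=
  hu.1.mono_set (uIcc_subset_uIcc (Icc_subset_uIcc hx) (Icc_subset_uIcc hy))

theorem sub_eq_integral (hu : ACOn u c d) (hx : x ∈ Icc c d) (hy : y ∈ Icc c d) :
    u y - u x = ∫ t in x..y, deriv u t := by
  have hc : c ∈ Icc c d := left_mem_Icc.2 (hx.1.trans hx.2)
  rw [hu.2 y hy, hu.2 x hx, add_sub_add_left_eq_sub,
    intervalIntegral.integral_interval_sub_left (hu.intervalIntegrable_deriv hc hy)
      (hu.intervalIntegrable_deriv hc hx)]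

theorem continuousOn (hu : ACOn u c d) : ContinuousOn u (Icc c d) :=
  ((continuousOn_const.add (intervalIntegral.continuousOn_primitive_interval' hu.1
    left_mem_uIcc)).mono Icc_subset_uIcc).congr hu.2

theorem le_add_integral_of_ae_deriv_le {g : ℝ → ℝ} (hu : ACOn u c d) (hx : x ∈ Icc c d)
    (hy : y ∈ Icc c d) (hxy : x ≤ y) (hg : IntervalIntegrable g volume x y)
    (hle : ∀ᵐ t ∂volume.restrict (Icc x y), deriv u t ≤ g t) :
    u y ≤ u x + ∫ t in x..y, g t := by
  have := intervalIntegral.integral_mono_ae_restrict hxy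
    (hu.intervalIntegrable_deriv hx hy) hg hle
  linarith [hu.sub_eq_integral hx hy]

theorem le_add_integral_of_ae_neg_le_deriv {g : ℝ → ℝ} (hu : ACOn u c d) (hx : x ∈ Icc c d)
    (hy : y ∈ Icc c d) (hxy : x ≤ y) (hg : IntervalIntegrable g volume x y)
    (hle : ∀ᵐ t ∂volume.restrict (Icc x y), -g t ≤ deriv u t) :
    u x ≤ u y + ∫ t in x..y, g t := by
  have := intervalIntegral.integral_mono_ae_restrict (f := fun t => -g t) hxy hg.neg
    (hu.intervalIntegrable_deriv hx hy) hle
  rw [intervalIntegral.integral_neg] at this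
  linarith [hu.sub_eq_integral hx hy]

theorem le_mul_abs_sub_of_ae_abs_deriv_le {M : ℝ} (hu : ACOn u c d) (hx : x ∈ Icc c d)
    (hy : y ∈ Icc c d) (hM : ∀ᵐ t ∂volume.restrict (Icc c d), |deriv u t| ≤ M) :
    |u y - u x| ≤ M * |y - x| := by
  rw [hu.sub_eq_integral hx hy, ← Real.norm_eq_abs]
  refine intervalIntegral.norm_integral_le_of_norm_le_const_ae ?_
  have hsub : uIoc x y ⊆ Icc c d := uIoc_subset_uIcc.trans
    ((uIcc_subset_uIcc (Icc_subset_uIcc hx) (Icc_subset_uIcc hy)).trans ?_)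
  · filter_upwards [(ae_restrict_iff' measurableSet_Icc).1 hM] with t ht hts
    exact ht (hsub hts)
  · rw [uIcc_of_le (hx.1.trans hx.2)]

theorem sq_sub_le_abs_mul_integral_sq (hu : ACOn u c d)
    (hu' : IntegrableOn (fun t => deriv u t ^ 2) (Ioo c d)) (hx : x ∈ Icc c d)
    (hy : y ∈ Icc c d) :
    (u y - u x) ^ 2 ≤ |y - x| * ∫ t in Ioo c d, deriv u t ^ 2 := by
  wlog hxy : x ≤ y generalizing x y
  · rw [← neg_sub, neg_sq, abs_sub_comm]
    exact this hy hx (le_of_not_ge hxy)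
  have hsub : Ioc x y ≤ᵐ[volume] Ioo c d :=
    (Ioc_subset_Icc_self.trans (Icc_subset_Icc hx.1 hy.2)).eventuallyLE.trans
      (Ioo_ae_eq_Icc (μ := volume)).symm.le
  have hint : IntegrableOn (deriv u) (Ioc x y) :=
    (intervalIntegrable_iff_integrableOn_Ioc_of_le hxy).1 (hu.intervalIntegrable_deriv hx hy)
  have hcs := sq_integral_le_measureReal_mul_integral_sq hint (hu'.mono_set_ae hsub)
  rw [measureReal_restrict_apply_univ, Real.volume_real_Ioc_of_le hxy] at hcs
  rw [hu.sub_eq_integral hx hy, intervalIntegral.integral_of_le hxy,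
    abs_of_nonneg (sub_nonneg.2 hxy)]
  exact hcs.trans (mul_le_mul_of_nonneg_left
    (setIntegral_mono_set hu' (ae_of_all _ fun t => sq_nonneg _) hsub) (sub_nonneg.2 hxy))

theorem sq_div_le_of_mul_rpow_le {a : ℝ → ℝ} {x₀ K : ℝ} (hu : ACOn u 0 1)
    (hu' : IntegrableOn (fun t => deriv u t ^ 2) (Ioo 0 1)) (hx₀ : x₀ ∈ Icc (0:ℝ) 1)
    (hux₀ : u x₀ = 0) (hc : 0 < c) (hx : x ∈ Icc (0:ℝ) 1)
    (hlow : c * |x - x₀| ^ K ≤ a x) :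
    u x ^ 2 / a x ≤ (∫ t in Ioo 0 1, deriv u t ^ 2) / c * |x - x₀| ^ (1 - K) := by
  set I := ∫ t in Ioo 0 1, deriv u t ^ 2
  have hI : 0 ≤ I := setIntegral_nonneg measurableSet_Ioo fun t _ => sq_nonneg _
  rcases eq_or_ne x x₀ with rfl | hne
  · rw [hux₀]
    simp only [ne_eq, OfNat.ofNat_ne_zero, not_false_eq_true, zero_pow, zero_div]
    positivity
  have hd : 0 < |x - x₀| := abs_pos.2 (sub_ne_zero.2 hne)
  have hden : 0 < c * |x - x₀| ^ K := mul_pos hc (Real.rpow_pos_of_pos hd _)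
  have hsq : u x ^ 2 ≤ |x - x₀| * I := by
    simpa [hux₀] using hu.sq_sub_le_abs_mul_integral_sq hu' hx₀ hx
  calc u x ^ 2 / a x ≤ |x - x₀| * I / (c * |x - x₀| ^ K) :=
        div_le_div₀ (by positivity) hsq hden hlow
    _ = I / c * |x - x₀| ^ (1 - K) := by
        rw [Real.rpow_sub hd, Real.rpow_one]
        field_simp

end ACOn

theorem MemH1inva.apply_eq_zero {a u : ℝ → ℝ} {x₀ : ℝ} (hu : MemH1inva a u) (ha : W1infty a)
    (hx₀ : x₀ ∈ Ioo (0:ℝ) 1) (ha0 : a x₀ = 0) (hpos : ∀ x ∈ Icc (0:ℝ) 1, x ≠ x₀ → 0 < a x) :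
    u x₀ = 0 := by
  obtain ⟨hac, M, hM⟩ := ha
  have hIcc : ∀ x ∈ Ioo x₀ 1, x ∈ Icc (0:ℝ) 1 := fun x hx => ⟨hx₀.1.le.trans hx.1.le, hx.2.le⟩
  refine eq_zero_of_integrableOn_sq_div_of_le_mul_sub (M := M) hx₀.2
    (hu.2.1.continuousOn.continuousAt (Icc_mem_nhds hx₀.1 hx₀.2))
    (fun x hx => hpos x (hIcc x hx) hx.1.ne') (fun x hx => ?_)
    (hu.1.2.mono_set (Ioo_subset_Ioo_left hx₀.1.le))
  have := hac.le_mul_abs_sub_of_ae_abs_deriv_le (Ioo_subset_Icc_self hx₀) (hIcc x hx) hM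
  rw [ha0, sub_zero, abs_of_pos (sub_pos.2 hx.1)] at this
  exact (le_abs_self _).trans this

section DegenerateCoefficient

variable {a : ℝ → ℝ} {x₀ K : ℝ}

theorem antitoneOn_div_rpow_sub (ha : ACOn a 0 1) (hx₀ : 0 ≤ x₀) (hK : 0 ≤ K)
    (hae : ∀ᵐ x ∂volume.restrict (Icc 0 1), (x - x₀) * deriv a x ≤ K * a x) :
    AntitoneOn (fun x => a x / (x - x₀) ^ K) (Ioc x₀ 1) := by
  intro x hx y hy hxy
  have hI : Icc x y ⊆ Icc 0 1 := Icc_subset_Icc (hx₀.trans hx.1.le) hy.2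
  have hpos : ∀ t ∈ Icc x y, 0 < t - x₀ := fun t ht => sub_pos.2 (hx.1.trans_le ht.1)
  have hg : ContinuousOn (fun t => K / (t - x₀)) (Icc x y) :=
    continuousOn_const.div (continuousOn_id.sub continuousOn_const) fun t ht => (hpos t ht).ne'
  have hw : ContinuousOn (fun t => (t - x₀) ^ (-K)) (Icc x y) :=
    (continuousOn_id.sub continuousOn_const).rpow_const fun t ht => Or.inl (hpos t ht).ne'
  have hw' : ∀ t ∈ Ioo x y, HasDerivAt (fun t => (t - x₀) ^ (-K))
      (-(K / (t - x₀) * (t - x₀) ^ (-K))) t := fun t ht => by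
    have ht0 := hpos t (Ioo_subset_Icc_self ht)
    convert ((hasDerivAt_id' t).sub_const x₀).rpow_const (p := -K) (Or.inl ht0.ne') using 1
    rw [Real.rpow_sub_one ht0.ne']
    ring
  have hle : ∀ z ∈ Icc x y, a z ≤ a x + ∫ t in x..z, K / (t - x₀) * a t := by
    intro z hz
    have hxz : Icc x z ⊆ Icc x y := Icc_subset_Icc le_rfl hz.2
    refine ha.le_add_integral_of_ae_deriv_le (hI (left_mem_Icc.2 hxy)) (hI hz) hz.1
      (((hg.mul (ha.continuousOn.mono hI)).mono hxz).intervalIntegrable_of_Icc hz.1) ?_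
    filter_upwards [ae_restrict_of_ae_restrict_of_subset (hxz.trans hI) hae,
      ae_restrict_mem measurableSet_Icc] with t ht htm
    rw [div_mul_eq_mul_div, le_div_iff₀ (hpos t (hxz htm))]
    linarith
  have key := integral_gronwall_weighted hxy (ha.continuousOn.mono hI) hg
    (fun t ht => div_nonneg hK (hpos t ht).le) hw
    (fun t ht => Real.rpow_nonneg (hpos t ht).le _) hw' hle
  simpa only [Real.rpow_neg (hpos _ (left_mem_Icc.2 hxy)).le,
    Real.rpow_neg (hpos _ (right_mem_Icc.2 hxy)).le, div_eq_mul_inv] using key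

theorem monotoneOn_div_rpow_sub (ha : ACOn a 0 1) (hx₀ : x₀ ≤ 1) (hK : 0 ≤ K)
    (hae : ∀ᵐ x ∂volume.restrict (Icc 0 1), (x - x₀) * deriv a x ≤ K * a x) :
    MonotoneOn (fun x => a x / (x₀ - x) ^ K) (Ico 0 x₀) := by
  intro x hx y hy hxy
  have hI : Icc x y ⊆ Icc 0 1 := Icc_subset_Icc hx.1 (hy.2.le.trans hx₀)
  have hpos : ∀ t ∈ Icc x y, 0 < x₀ - t := fun t ht => sub_pos.2 (ht.2.trans_lt hy.2)
  have hg : ContinuousOn (fun t => K / (x₀ - t)) (Icc x y) :=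
    continuousOn_const.div (continuousOn_const.sub continuousOn_id) fun t ht => (hpos t ht).ne'
  have hw : ContinuousOn (fun t => (x₀ - t) ^ (-K)) (Icc x y) :=
    (continuousOn_const.sub continuousOn_id).rpow_const fun t ht => Or.inl (hpos t ht).ne'
  have hw' : ∀ t ∈ Ioo x y, HasDerivAt (fun t => (x₀ - t) ^ (-K))
      (K / (x₀ - t) * (x₀ - t) ^ (-K)) t := fun t ht => by
    have ht0 := hpos t (Ioo_subset_Icc_self ht)
    convert ((hasDerivAt_id' t).const_sub x₀).rpow_const (p := -K) (Or.inl ht0.ne') using 1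
    rw [Real.rpow_sub_one ht0.ne']
    ring
  have hle : ∀ z ∈ Icc x y, a z ≤ a y + ∫ t in z..y, K / (x₀ - t) * a t := by
    intro z hz
    have hzy : Icc z y ⊆ Icc x y := Icc_subset_Icc hz.1 le_rfl
    refine ha.le_add_integral_of_ae_neg_le_deriv (hI hz) (hI (right_mem_Icc.2 hxy)) hz.2
      (((hg.mul (ha.continuousOn.mono hI)).mono hzy).intervalIntegrable_of_Icc hz.2) ?_
    filter_upwards [ae_restrict_of_ae_restrict_of_subset (hzy.trans hI) hae,
      ae_restrict_mem measurableSet_Icc] with t ht htm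
    rw [div_mul_eq_mul_div, neg_le, le_div_iff₀ (hpos t (hzy htm))]
    linarith
  have key := integral_gronwall_weighted_rev hxy (ha.continuousOn.mono hI) hg
    (fun t ht => div_nonneg hK (hpos t ht).le) hw
    (fun t ht => Real.rpow_nonneg (hpos t ht).le _) hw' hle
  simpa only [Real.rpow_neg (hpos _ (left_mem_Icc.2 hxy)).le,
    Real.rpow_neg (hpos _ (right_mem_Icc.2 hxy)).le, div_eq_mul_inv] using key

theorem DegAt.exists_pos_mul_abs_sub_rpow_le (h : DegAt a x₀ K) (ha : ACOn a 0 1) (hK : 0 < K) :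
    ∃ c > 0, ∀ x ∈ Icc (0:ℝ) 1, c * |x - x₀| ^ K ≤ a x := by
  obtain ⟨hx₀, ha0, hpos, hae⟩ := h
  have hc₀ : 0 < a 0 / (x₀ - 0) ^ K :=
    div_pos (hpos 0 (left_mem_Icc.2 zero_le_one) hx₀.1.ne)
      (Real.rpow_pos_of_pos (by linarith [hx₀.1]) _)
  have hc₁ : 0 < a 1 / (1 - x₀) ^ K :=
    div_pos (hpos 1 (right_mem_Icc.2 zero_le_one) hx₀.2.ne')
      (Real.rpow_pos_of_pos (by linarith [hx₀.2]) _)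
  refine ⟨min (a 0 / (x₀ - 0) ^ K) (a 1 / (1 - x₀) ^ K), lt_min hc₀ hc₁, fun x hx => ?_⟩
  rcases lt_trichotomy x x₀ with hlt | rfl | hgt
  · have hmono : a 0 / (x₀ - 0) ^ K ≤ a x / (x₀ - x) ^ K :=
      monotoneOn_div_rpow_sub ha hx₀.2.le hK.le hae ⟨le_rfl, hx₀.1⟩ ⟨hx.1, hlt⟩ hx.1
    have hd : 0 < x₀ - x := sub_pos.2 hlt
    rw [le_div_iff₀ (Real.rpow_pos_of_pos hd _)] at hmono
    rw [abs_sub_comm, abs_of_pos hd]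
    exact (mul_le_mul_of_nonneg_right (min_le_left _ _) (Real.rpow_nonneg hd.le _)).trans hmono
  · simp [ha0, Real.zero_rpow hK.ne']
  · have hanti : a 1 / (1 - x₀) ^ K ≤ a x / (x - x₀) ^ K :=
      antitoneOn_div_rpow_sub ha hx₀.1.le hK.le hae ⟨hgt, hx.2⟩ ⟨hx₀.2, le_rfl⟩ hx.2
    have hd : 0 < x - x₀ := sub_pos.2 hgt
    rw [le_div_iff₀ (Real.rpow_pos_of_pos hd _)] at hanti
    rw [abs_of_pos hd]
    exact (mul_le_mul_of_nonneg_right (min_le_right _ _) (Real.rpow_nonneg hd.le _)).trans hanti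

end DegenerateCoefficient

/-- Characterization of `H¹_{1/a}(0,1)` in the strongly degenerate case and norm
equivalence. -/
theorem statement10 (a : ℝ → ℝ) (x₀ : ℝ) (ha : ∃ K, StronglyDeg a x₀ K) :
    (∀ u : ℝ → ℝ, MemH1inva a u → u x₀ = 0) ∧
    ∃ C > 0, ∀ u : ℝ → ℝ, MemH1inva a u →
      (∫ x in Ioo (0:ℝ) 1, (u x)^2 / a x) + (∫ x in Ioo (0:ℝ) 1, (deriv u x)^2)
        ≤ C * ∫ x in Ioo (0:ℝ) 1, (deriv u x)^2 := by
  obtain ⟨K, hdeg, hW, hK⟩ := ha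
  obtain ⟨c, hc, hlow⟩ := hdeg.exists_pos_mul_abs_sub_rpow_le hW.1 (by linarith [hK.1])
  obtain ⟨hx₀, ha0, hpos, -⟩ := hdeg
  have hvanish : ∀ u : ℝ → ℝ, MemH1inva a u → u x₀ = 0 := fun u hu =>
    hu.apply_eq_zero hW hx₀ ha0 hpos
  have hweight : IntegrableOn (fun x => |x - x₀| ^ (1 - K)) (Ioo 0 1) :=
    (intervalIntegrable_iff_integrableOn_Ioo_of_le zero_le_one).1 (by
      simpa using (intervalIntegrable_abs_rpow (a := -x₀) (b := 1 - x₀)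
        (by linarith [hK.2] : -1 < 1 - K)).comp_sub_right x₀)
  set J := ∫ x in Ioo (0:ℝ) 1, |x - x₀| ^ (1 - K)
  have hJ : 0 ≤ J := setIntegral_nonneg measurableSet_Ioo fun x _ => by positivity
  refine ⟨hvanish, J / c + 1, by positivity, fun u hu => ?_⟩
  set I := ∫ x in Ioo (0:ℝ) 1, deriv u x ^ 2
  have hbound : ∫ x in Ioo (0:ℝ) 1, u x ^ 2 / a x ≤ I / c * J := by
    rw [← integral_const_mul]
    exact setIntegral_mono_on hu.1.2 (hweight.const_mul _) measurableSet_Ioo fun x hx =>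
      hu.2.1.sq_div_le_of_mul_rpow_le hu.2.2 (Ioo_subset_Icc_self hx₀) (hvanish u hu) hc
        (Ioo_subset_Icc_self hx) (hlow x (Ioo_subset_Icc_self hx))
  linarith [show I / c * J = J / c * I by ring]
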